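/- (Schur's second multiplier theorem) Let A be a Schur ring over a finite abelian group G, p a prime divisor of |G|, and H = {g ∈ G : g^p = e}. Then for every A-set X, the set X^[p] = {x^p : x ∈ X and |X ∩ Hx| ≢ 0 (mod p)} is an A-set. -/

import Mathlib

open scoped BigOperators

/-- The indicator element `X̲ = Σ_{x∈X} x` of a finset in the integral group ring `ℤG`. -/
noncomputable def grpInd {G : Type*} [Group G] (X : Finset G) : MonoidAlgebra ℤ G :=
  ∑ x ∈ X, MonoidAlgebra.single x (1 : ℤ)

/-- A Schur ring over a finite group `G`: a partition of `G` containing `{1}`,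
closed under inverses, whose indicator elements span a subring of `ℤG`. -/
structure SchurRing (G : Type*) [Group G] [Fintype G] [DecidableEq G] where
  parts : Finset (Finset G)
  nonempty_mem : ∀ X ∈ parts, X.Nonempty
  cover : ∀ g : G, ∃ X ∈ parts, g ∈ X
  pairwise_disjoint : ∀ X ∈ parts, ∀ Y ∈ parts, X ≠ Y → Disjoint X Y
  one_mem : ({1} : Finset G) ∈ parts
  inv_mem : ∀ X ∈ parts, X.image (·⁻¹) ∈ parts
  mul_mem : ∀ X ∈ parts, ∀ Y ∈ parts, ∃ c : Finset G → ℤ,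
    grpInd X * grpInd Y = ∑ Z ∈ parts, c Z • grpInd Z

namespace SchurRing

variable {G : Type*} [Group G] [Fintype G] [DecidableEq G]

/-- The underlying `ℤ`-module of the Schur ring: the span of the indicators of basic sets. -/
noncomputable def carrier (A : SchurRing G) : Submodule ℤ (MonoidAlgebra ℤ G) :=
  Submodule.span ℤ {v | ∃ X ∈ A.parts, v = grpInd X}

/-- `X ⊆ G` is an `A`-set if its indicator lies in `A`. -/
def IsASet (A : SchurRing G) (X : Finset G) : Prop := grpInd X ∈ A.carrier

/-- `A` is a subring of `B` (as S-rings over the same group). -/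
def le (A B : SchurRing G) : Prop := ∀ X ∈ A.parts, grpInd X ∈ B.carrier

end SchurRing

/-- An algebraic isomorphism of Schur rings: a bijection of basic sets preserving all
structure constants (the structure constant `c^Z_{X,Y}` is the coefficient of the
product `X̲·Y̲` at any `z ∈ Z`). -/
def IsAlgIso {G G' : Type*} [Group G] [Fintype G] [DecidableEq G]
    [Group G'] [Fintype G'] [DecidableEq G']
    (A : SchurRing G) (A' : SchurRing G') (φ : Finset G → Finset G') : Prop :=
  Set.BijOn φ ↑A.parts ↑A'.parts ∧
  ∀ X ∈ A.parts, ∀ Y ∈ A.parts, ∀ Z ∈ A.parts, ∀ z ∈ Z, ∀ z' ∈ φ Z,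
    (grpInd X * grpInd Y).coeff z = (grpInd (φ X) * grpInd (φ Y)).coeff z'

/-- A combinatorial isomorphism of Schur rings: a bijection `G → G'` mapping basic sets to
basic sets and inducing a Cayley graph isomorphism on each basic set. -/
def IsCombIso {G G' : Type*} [Group G] [Fintype G] [DecidableEq G]
    [Group G'] [Fintype G'] [DecidableEq G']
    (A : SchurRing G) (A' : SchurRing G') (f : G → G') : Prop :=
  Function.Bijective f ∧
  ∀ X ∈ A.parts, X.image f ∈ A'.parts ∧
    ∀ g h : G, h * g⁻¹ ∈ X ↔ f h * (f g)⁻¹ ∈ X.image f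

/-- An automorphism of a Schur ring: a permutation of `G` preserving the edge set of
`Cay(G,X)` for every basic set `X`. -/
def IsSchurAut {G : Type*} [Group G] [Fintype G] [DecidableEq G]
    (A : SchurRing G) (f : G → G) : Prop :=
  Function.Bijective f ∧ ∀ X ∈ A.parts, ∀ g h : G, h * g⁻¹ ∈ X ↔ f h * (f g)⁻¹ ∈ X

/-- Separability with respect to the class of (finite) abelian groups. -/
def SchurRing.IsSeparableAbelian {G : Type} [Group G] [Fintype G] [DecidableEq G]
    (A : SchurRing G) : Prop :=
  ∀ (G' : Type) [CommGroup G'] [Fintype G'] [DecidableEq G'],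
    ∀ (A' : SchurRing G') (φ : Finset G → Finset G'),
    IsAlgIso A A' φ →
    ∃ f : G → G', IsCombIso A A' f ∧ ∀ X ∈ A.parts, φ X = X.image f

/-!
Reduce modulo `p`: `G` is abelian, so `𝔽_p G` is commutative and the Frobenius map is additive;
hence `X̲ ^ p ≡ Σ_{x ∈ X} x ^ p` and the coefficient of `g` in `X̲ ^ p` is congruent mod `p` to
`|{x ∈ X : x ^ p = g}| = |X ∩ Hx|` for any `x` with `x ^ p = g`. As `X̲ ^ p ∈ A` and elements of `A`
have coefficients constant on basic sets, the set of `g` at which this coefficient is nonzero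
mod `p` is a union of basic sets; it is `X^[p]`.
-/

open Finset

lemma coeff_grpInd {G : Type*} [Group G] [DecidableEq G] (X : Finset G) (g : G) :
    (grpInd X).coeff g = if g ∈ X then 1 else 0 := by
  simp [grpInd, Finsupp.single_apply]

lemma coeff_grpInd_pow_prime {G : Type*} [CommGroup G] [DecidableEq G] (X : Finset G)
    (p : ℕ) [Fact p.Prime] (g : G) :
    (((grpInd X ^ p).coeff g : ℤ) : ZMod p) = #{x ∈ X | x ^ p = g} := by
  let π := MonoidAlgebra.mapRingHom G (Int.castRingHom (ZMod p))
  have : CharP (MonoidAlgebra (ZMod p) G) p :=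
    charP_of_injective_algebraMap' (ZMod p) p
  have hπ : π (grpInd X) = ∑ x ∈ X, MonoidAlgebra.single x 1 := by
    simp [π, grpInd, MonoidAlgebra.mapRingHom_single]
  calc (((grpInd X ^ p).coeff g : ℤ) : ZMod p) = (π (grpInd X ^ p)).coeff g := by
        simp only [π, MonoidAlgebra.coeff_mapRingHom, eq_intCast]
    _ = (∑ x ∈ X, MonoidAlgebra.single (x ^ p) (1 : ZMod p)).coeff g := by
        simp [map_pow, hπ, sum_pow_char, MonoidAlgebra.single_pow]
    _ = #{x ∈ X | x ^ p = g} := by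
        simp [Finsupp.single_apply, sum_boole]

lemma Finset.image_filter_card_fiber {α β : Type*} [DecidableEq β] [Fintype β] (f : α → β)
    (X : Finset α) (P : ℕ → Prop) [DecidablePred P] (hP : ¬ P 0) :
    {x ∈ X | P #{y ∈ X | f y = f x}}.image f = ({b | P #{y ∈ X | f y = b}} : Finset β) := by
  ext b
  simp only [mem_image, mem_filter, mem_univ, true_and]
  constructor
  · rintro ⟨x, ⟨-, hx⟩, rfl⟩
    exact hx
  · intro hb
    obtain ⟨x, hx⟩ : {y ∈ X | f y = b}.Nonempty := by
      rw [nonempty_iff_ne_empty]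
      rintro h
      rw [h, card_empty] at hb
      exact hP hb
    obtain ⟨hxX, rfl⟩ := mem_filter.mp hx
    exact ⟨x, ⟨hxX, hb⟩, rfl⟩

namespace SchurRing

variable {G : Type*} [Group G] [Fintype G] [DecidableEq G]

lemma one_mem_carrier (A : SchurRing G) : (1 : MonoidAlgebra ℤ G) ∈ A.carrier := by
  have : (1 : MonoidAlgebra ℤ G) = grpInd {1} := by simp [grpInd, MonoidAlgebra.one_def]
  exact this ▸ Submodule.subset_span ⟨{1}, A.one_mem, rfl⟩

lemma mul_mem_carrier (A : SchurRing G) {a b : MonoidAlgebra ℤ G}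
    (ha : a ∈ A.carrier) (hb : b ∈ A.carrier) : a * b ∈ A.carrier := by
  have : A.carrier * A.carrier ≤ A.carrier := by
    rw [carrier, Submodule.span_mul_span, Submodule.span_le]
    rintro _ ⟨_, ⟨X, hX, rfl⟩, _, ⟨Y, hY, rfl⟩, rfl⟩
    obtain ⟨c, hc⟩ := A.mul_mem X hX Y hY
    dsimp only
    rw [hc]
    exact Submodule.sum_mem _ fun Z hZ =>
      Submodule.smul_mem _ _ (Submodule.subset_span ⟨Z, hZ, rfl⟩)
  exact this (Submodule.mul_mem_mul ha hb)

noncomputable def toSubalgebra (A : SchurRing G) : Subalgebra ℤ (MonoidAlgebra ℤ G) :=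
  A.carrier.toSubalgebra A.one_mem_carrier fun _ _ => A.mul_mem_carrier

lemma coeff_eq_of_mem_carrier (A : SchurRing G) {b : MonoidAlgebra ℤ G} (hb : b ∈ A.carrier)
    {Z : Finset G} (hZ : Z ∈ A.parts) {z z' : G} (hz : z ∈ Z) (hz' : z' ∈ Z) :
    b.coeff z = b.coeff z' := by
  induction hb using Submodule.span_induction with
  | mem x hx =>
    obtain ⟨Y, hY, rfl⟩ := hx
    rw [coeff_grpInd, coeff_grpInd]
    by_cases h : Y = Z
    · simp [h, hz, hz']
    · have hd := A.pairwise_disjoint Y hY Z hZ h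
      simp [disjoint_right.mp hd hz, disjoint_right.mp hd hz']
  | zero => simp
  | add x y _ _ hx hy => simp [hx, hy]
  | smul c x _ hx => simp only [MonoidAlgebra.coeff_smul_apply, hx]

lemma isASet_filter (A : SchurRing G) (P : G → Prop) [DecidablePred P]
    (hP : ∀ Z ∈ A.parts, ∀ z ∈ Z, ∀ z' ∈ Z, P z → P z') :
    A.IsASet ({g | P g} : Finset G) := by
  have hunion : ({g | P g} : Finset G) = {Z ∈ A.parts | ∃ z ∈ Z, P z}.biUnion id := by
    ext g
    simp only [mem_filter, mem_univ, true_and, mem_biUnion, id]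
    constructor
    · intro hg
      obtain ⟨Z, hZ, hgZ⟩ := A.cover g
      exact ⟨Z, ⟨hZ, g, hgZ, hg⟩, hgZ⟩
    · rintro ⟨Z, ⟨hZ, z, hzZ, hz⟩, hgZ⟩
      exact hP Z hZ z hzZ g hgZ hz
  rw [IsASet, hunion, grpInd, sum_biUnion]
  · exact Submodule.sum_mem _ fun Z hZ => Submodule.subset_span ⟨Z, (mem_filter.mp hZ).1, rfl⟩
  · intro Y hY Z hZ hYZ
    exact A.pairwise_disjoint Y (mem_filter.mp hY).1 Z (mem_filter.mp hZ).1 hYZ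

lemma isASet_filter_coeff (A : SchurRing G) {b : MonoidAlgebra ℤ G} (hb : b ∈ A.carrier)
    (Q : ℤ → Prop) [DecidablePred Q] : A.IsASet ({g | Q (b.coeff g)} : Finset G) :=
  A.isASet_filter _ fun _ hZ _ hz _ hz' => (A.coeff_eq_of_mem_carrier hb hZ hz hz') ▸ id

end SchurRing

theorem stmt4_general {G : Type*} [CommGroup G] [Fintype G] [DecidableEq G] (A : SchurRing G)
    (p : ℕ) (hp : p.Prime)
    (X : Finset G) (hX : A.IsASet X) :
    A.IsASet ((X.filter (fun x =>
        ¬ (p ∣ (X.filter (fun y => (y * x⁻¹) ^ p = 1)).card))).image (fun x => x ^ p)) := by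
  have : Fact p.Prime := ⟨hp⟩
  have hXp : grpInd X ^ p ∈ A.carrier := A.toSubalgebra.pow_mem hX p
  have hset : (X.filter (fun x =>
        ¬ (p ∣ (X.filter (fun y => (y * x⁻¹) ^ p = 1)).card))).image (fun x => x ^ p) =
      ({g | (((grpInd X ^ p).coeff g : ℤ) : ZMod p) ≠ 0} : Finset G) := by
    simp only [mul_pow, inv_pow, mul_inv_eq_one, coeff_grpInd_pow_prime, ne_eq,
      ZMod.natCast_eq_zero_iff]
    exact image_filter_card_fiber (· ^ p) X (fun n => ¬ p ∣ n) (not_not_intro (dvd_zero p))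
  rw [hset]
  exact A.isASet_filter_coeff hXp fun n : ℤ => (n : ZMod p) ≠ 0

/-- Schur's second multiplier theorem: for a prime `p` dividing `|G|`,
with `H = {g : g^p = 1}`, the set `X^[p] = {x^p : x ∈ X, |X ∩ Hx| ≢ 0 (mod p)}`
is an `A`-set for every `A`-set `X`. -/
theorem stmt4 {G : Type*} [CommGroup G] [Fintype G] [DecidableEq G] (A : SchurRing G)
    (p : ℕ) (hp : p.Prime) (hpG : p ∣ Fintype.card G)
    (X : Finset G) (hX : A.IsASet X) :
    A.IsASet ((X.filter (fun x =>
        ¬ (p ∣ (X.filter (fun y => (y * x⁻¹) ^ p = 1)).card))).image (fun x => x ^ p)) :=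
  stmt4_general A p hp X hX
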